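/- arXiv:2312.11428 — 7 statements merged into one kernel-verified Lean document; each statement's English description precedes it below -/
import Mathlib

section
/- Let w be any word in L and R (including the empty word). Then tr(Lw) = tr(wL) ≥ tr(w) and tr(Rw) = tr(wR) ≥ tr(w), and both inequalities are strict whenever tr(w) ≠ 2. -/
/-- The matrix `L = [[1,1],[0,1]]`. -/
def Lmat : Matrix (Fin 2) (Fin 2) ℤ := !![1, 1; 0, 1]

/-- The matrix `R = [[1,0],[1,1]]`. -/
def Rmat : Matrix (Fin 2) (Fin 2) ℤ := !![1, 0; 1, 1]

/-- A word in the letters `L` and `R` is a list of booleans (`true` = `L`, `false` = `R`);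
its matrix is the product of the corresponding matrices in order. -/
def wordMatrix (w : List Bool) : Matrix (Fin 2) (Fin 2) ℤ :=
  (w.map fun b => if b then Lmat else Rmat).prod

lemma wordMatrix_nil : wordMatrix [] = 1 := rfl

lemma wordMatrix_cons (b : Bool) (w : List Bool) :
    wordMatrix (b :: w) = (if b then Lmat else Rmat) * wordMatrix w := by
  simp [wordMatrix]

lemma wm_nonneg (w : List Bool) : ∀ i j, 0 ≤ wordMatrix w i j := by
  induction w with
  | nil => intro i j; fin_cases i <;> fin_cases j <;> simp [wordMatrix_nil, Matrix.one_apply]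
  | cons b w ih =>
    intro i j
    rw [wordMatrix_cons]
    cases b <;>
    · simp only [if_true, if_false, Matrix.mul_apply, Fin.sum_univ_two]
      fin_cases i <;> fin_cases j <;>
        simp [Lmat, Rmat] <;> linarith [ih 0 0, ih 0 1, ih 1 0, ih 1 1]

lemma wm_det (w : List Bool) : (wordMatrix w).det = 1 := by
  induction w with
  | nil => simp [wordMatrix_nil]
  | cons b w ih =>
    rw [wordMatrix_cons, Matrix.det_mul, ih, mul_one]
    cases b <;> simp [Lmat, Rmat, Matrix.det_fin_two_of]

theorem trace_mul_letter (w : List Bool) :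
    (Lmat * wordMatrix w).trace = (wordMatrix w * Lmat).trace ∧
    (wordMatrix w).trace ≤ (Lmat * wordMatrix w).trace ∧
    (Rmat * wordMatrix w).trace = (wordMatrix w * Rmat).trace ∧
    (wordMatrix w).trace ≤ (Rmat * wordMatrix w).trace ∧
    ((wordMatrix w).trace ≠ 2 →
      (wordMatrix w).trace < (Lmat * wordMatrix w).trace ∧
      (wordMatrix w).trace < (Rmat * wordMatrix w).trace) := by
  have h00 := wm_nonneg w 0 0
  have h01 := wm_nonneg w 0 1
  have h10 := wm_nonneg w 1 0
  have h11 := wm_nonneg w 1 1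
  set M := wordMatrix w with hM
  have hdet : M 0 0 * M 1 1 - M 0 1 * M 1 0 = 1 := by
    have := wm_det w
    rwa [Matrix.det_fin_two] at this
  have htr : M.trace = M 0 0 + M 1 1 := Matrix.trace_fin_two M
  have hL : (Lmat * M).trace = M.trace + M 1 0 := by
    simp [Matrix.trace_fin_two, Matrix.mul_apply, Fin.sum_univ_two, Lmat, Matrix.vecMul, dotProduct]; ring
  have hL' : (M * Lmat).trace = M.trace + M 1 0 := by
    simp [Matrix.trace_fin_two, Matrix.mul_apply, Fin.sum_univ_two, Lmat,
      Matrix.vecMul, dotProduct]; ring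
  have hR : (Rmat * M).trace = M.trace + M 0 1 := by
    simp [Matrix.trace_fin_two, Matrix.mul_apply, Fin.sum_univ_two, Rmat, Matrix.vecMul, dotProduct]; ring
  have hR' : (M * Rmat).trace = M.trace + M 0 1 := by
    simp [Matrix.trace_fin_two, Matrix.mul_apply, Fin.sum_univ_two, Rmat,
      Matrix.vecMul, dotProduct]; ring
  refine ⟨hL.trans hL'.symm, by rw [hL]; linarith, hR.trans hR'.symm, by rw [hR]; linarith,
    fun hne => ?_⟩
  rw [htr] at hne
  have k10 : M 1 0 = 0 → M 0 0 + M 1 1 = 2 := by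
    intro h
    rw [h, mul_zero, sub_zero] at hdet
    rcases Int.mul_eq_one_iff_eq_one_or_neg_one.mp hdet with ⟨a, b⟩ | ⟨a, b⟩ <;> omega
  have k01 : M 0 1 = 0 → M 0 0 + M 1 1 = 2 := by
    intro h
    rw [h, zero_mul, sub_zero] at hdet
    rcases Int.mul_eq_one_iff_eq_one_or_neg_one.mp hdet with ⟨a, b⟩ | ⟨a, b⟩ <;> omega
  constructor
  · rw [hL]; have : M 1 0 ≠ 0 := fun h => hne (k10 h); omega
  · rw [hR]; have : M 0 1 ≠ 0 := fun h => hne (k01 h); omega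
end

section
/- Let w be a word in L and R consisting of k letters. If tr(w) > 2, then tr(w) ≥ k + 1. -/
lemma key : ∀ w : List Bool,
    (1 ≤ wordMatrix w 0 0 ∧ 1 ≤ wordMatrix w 1 1 ∧ 1 ≤ wordMatrix w 0 1 ∧
      1 ≤ wordMatrix w 1 0 ∧ (w.length : ℤ) + 1 ≤ wordMatrix w 0 0 + wordMatrix w 1 1)
    ∨ wordMatrix w = !![1, (w.length : ℤ); 0, 1]
    ∨ wordMatrix w = !![1, 0; (w.length : ℤ), 1] := by
  intro w
  induction w with
  | nil =>
      right; left
      simp [wordMatrix, Matrix.one_fin_two]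
  | cons b w ih =>
      rw [wordMatrix_cons]
      cases b with
      | true =>
          simp only [if_true]
          rcases ih with ⟨ha, hd, hb, hc, ht⟩ | hB | hC
          · left
            have e00 : (Lmat * wordMatrix w) 0 0 = wordMatrix w 0 0 + wordMatrix w 1 0 := by
              simp [Lmat, Matrix.mul_apply, Fin.sum_univ_two]
            have e01 : (Lmat * wordMatrix w) 0 1 = wordMatrix w 0 1 + wordMatrix w 1 1 := by
              simp [Lmat, Matrix.mul_apply, Fin.sum_univ_two]
            have e10 : (Lmat * wordMatrix w) 1 0 = wordMatrix w 1 0 := by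
              simp [Lmat, Matrix.mul_apply, Fin.sum_univ_two]
            have e11 : (Lmat * wordMatrix w) 1 1 = wordMatrix w 1 1 := by
              simp [Lmat, Matrix.mul_apply, Fin.sum_univ_two]
            rw [e00, e01, e10, e11]
            refine ⟨by linarith, hd, by linarith, hc, ?_⟩
            push_cast [List.length_cons]
            linarith
          · right; left
            rw [hB]
            have : Lmat * !![1, (w.length : ℤ); 0, 1] = !![1, (w.length : ℤ) + 1; 0, 1] := by
              simp [Lmat, Matrix.mul_fin_two]
            rw [this]
            push_cast [List.length_cons]
            ring_nf
          · have hLC : Lmat * !![1, 0; (w.length : ℤ), 1]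
                = !![1 + (w.length : ℤ), 1; (w.length : ℤ), 1] := by
              simp [Lmat, Matrix.mul_fin_two]
            rcases Nat.eq_zero_or_pos w.length with h0 | hpos
            · right; left
              rw [hC, hLC]
              simp [h0]
            · left
              rw [hC, hLC]
              have : (1:ℤ) ≤ (w.length : ℤ) := by exact_mod_cast hpos
              refine ⟨?_, ?_, ?_, ?_, ?_⟩ <;>
                simp [Matrix.cons_val_zero, Matrix.cons_val_one] <;>
                push_cast [List.length_cons] <;> linarith
      | false =>
          simp only [if_neg (by simp : ¬(false = true))]
          rcases ih with ⟨ha, hd, hb, hc, ht⟩ | hB | hC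
          · left
            have e00 : (Rmat * wordMatrix w) 0 0 = wordMatrix w 0 0 := by
              simp [Rmat, Matrix.mul_apply, Fin.sum_univ_two]
            have e01 : (Rmat * wordMatrix w) 0 1 = wordMatrix w 0 1 := by
              simp [Rmat, Matrix.mul_apply, Fin.sum_univ_two]
            have e10 : (Rmat * wordMatrix w) 1 0 = wordMatrix w 0 0 + wordMatrix w 1 0 := by
              simp [Rmat, Matrix.mul_apply, Fin.sum_univ_two]
            have e11 : (Rmat * wordMatrix w) 1 1 = wordMatrix w 0 1 + wordMatrix w 1 1 := by
              simp [Rmat, Matrix.mul_apply, Fin.sum_univ_two]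
            rw [e00, e01, e10, e11]
            refine ⟨ha, by linarith, hb, by linarith, ?_⟩
            push_cast [List.length_cons]
            linarith
          · have hRB : Rmat * !![1, (w.length : ℤ); 0, 1]
                = !![1, (w.length : ℤ); 1, (w.length : ℤ) + 1] := by
              simp [Rmat, Matrix.mul_fin_two]
            rcases Nat.eq_zero_or_pos w.length with h0 | hpos
            · right; right
              rw [hB, hRB]
              simp [h0]
            · left
              rw [hB, hRB]
              have : (1:ℤ) ≤ (w.length : ℤ) := by exact_mod_cast hpos
              refine ⟨?_, ?_, ?_, ?_, ?_⟩ <;>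
                simp [Matrix.cons_val_zero, Matrix.cons_val_one] <;>
                push_cast [List.length_cons] <;> linarith
          · right; right
            rw [hC]
            have : Rmat * !![1, 0; (w.length : ℤ), 1] = !![1, 0; 1 + (w.length : ℤ), 1] := by
              simp [Rmat, Matrix.mul_fin_two]
            rw [this]
            push_cast [List.length_cons]
            rw [add_comm (1:ℤ)]

theorem trace_ge_length_add_one (w : List Bool) (h : 2 < (wordMatrix w).trace) :
    (w.length : ℤ) + 1 ≤ (wordMatrix w).trace := by
  rw [Matrix.trace_fin_two] at h ⊢
  rcases key w with ⟨_, _, _, _, ht⟩ | hB | hC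
  · exact ht
  · rw [hB] at h; simp at h
  · rw [hC] at h; simp at h
end

section
/- There exists a constant C > 0 such that for every integer m ≥ 3, the set of words w in L and R satisfying 3 ≤ tr(w) ≤ m is finite and has cardinality at most C · m² · log(m). -/
open Finset

def letterMatrix (b : Bool) : Matrix (Fin 2) (Fin 2) ℕ :=
  if b then !![1, 1; 0, 1] else !![1, 0; 1, 1]

def natWordMatrix (w : List Bool) : Matrix (Fin 2) (Fin 2) ℕ :=
  (w.map letterMatrix).prod

lemma wordMatrix_eq_map (w : List Bool) : wordMatrix w = (natWordMatrix w).map (↑) := by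
  have hletter : (fun b : Bool => if b then Lmat else Rmat) =
      (Nat.castRingHom ℤ).mapMatrix ∘ letterMatrix := by
    funext b; cases b <;> ext i j <;> fin_cases i <;> fin_cases j <;> rfl
  rw [wordMatrix, natWordMatrix, hletter, ← List.map_map, ← map_list_prod]
  rfl

lemma trace_wordMatrix (w : List Bool) :
    (wordMatrix w).trace = ((natWordMatrix w).trace : ℤ) := by
  simp [wordMatrix_eq_map, Matrix.trace_fin_two]

section cons
variable (w : List Bool) (j : Fin 2)

@[simp] lemma natWordMatrix_nil : natWordMatrix [] = 1 := rfl

@[simp] lemma natWordMatrix_true_cons_zero :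
    natWordMatrix (true :: w) 0 j = natWordMatrix w 0 j + natWordMatrix w 1 j := by
  simp [natWordMatrix, letterMatrix, Matrix.mul_apply, Fin.sum_univ_two]

@[simp] lemma natWordMatrix_true_cons_one :
    natWordMatrix (true :: w) 1 j = natWordMatrix w 1 j := by
  simp [natWordMatrix, letterMatrix, Matrix.mul_apply, Fin.sum_univ_two]

@[simp] lemma natWordMatrix_false_cons_zero :
    natWordMatrix (false :: w) 0 j = natWordMatrix w 0 j := by
  simp [natWordMatrix, letterMatrix, Matrix.mul_apply, Fin.sum_univ_two]

@[simp] lemma natWordMatrix_false_cons_one :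
    natWordMatrix (false :: w) 1 j = natWordMatrix w 0 j + natWordMatrix w 1 j := by
  simp [natWordMatrix, letterMatrix, Matrix.mul_apply, Fin.sum_univ_two]

end cons

lemma natWordMatrix_det (w : List Bool) :
    natWordMatrix w 0 0 * natWordMatrix w 1 1 = natWordMatrix w 0 1 * natWordMatrix w 1 0 + 1 := by
  induction w with
  | nil => simp
  | cons b w ih => cases b <;> simp <;> linarith

lemma natWordMatrix_cons_ne_one (b : Bool) (w : List Bool) : natWordMatrix (b :: w) ≠ 1 := by
  intro h
  have h0 := congrFun₂ h 0
  have h1 := congrFun₂ h 1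
  cases b
  · have := h0 0; have := h1 0; simp_all
  · have := h0 1; have := h1 1; simp_all

lemma exists_natWordMatrix_zero_ne_zero (w : List Bool) : ∃ j, natWordMatrix w 0 j ≠ 0 := by
  by_contra! h
  simpa [h 0, h 1] using natWordMatrix_det w

lemma natWordMatrix_false_cons_ne_true_cons (w w' : List Bool) :
    natWordMatrix (false :: w) ≠ natWordMatrix (true :: w') := by
  intro h
  obtain ⟨j, hj⟩ := exists_natWordMatrix_zero_ne_zero w'
  have h0 := congrFun₂ h 0 j
  have h1 := congrFun₂ h 1 j
  simp only [natWordMatrix_true_cons_zero, natWordMatrix_true_cons_one,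
    natWordMatrix_false_cons_zero, natWordMatrix_false_cons_one] at h0 h1
  omega

lemma head_eq_of_natWordMatrix_eq {b b' : Bool} {w w' : List Bool}
    (h : natWordMatrix (b :: w) = natWordMatrix (b' :: w')) : b = b' := by
  cases b <;> cases b'
  · rfl
  · exact absurd h (natWordMatrix_false_cons_ne_true_cons w w')
  · exact absurd h.symm (natWordMatrix_false_cons_ne_true_cons w' w)
  · rfl

lemma natWordMatrix_eq_of_cons_eq {b : Bool} {w w' : List Bool}
    (h : natWordMatrix (b :: w) = natWordMatrix (b :: w')) : natWordMatrix w = natWordMatrix w' := by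
  ext i j
  have h0 := congrFun₂ h 0 j
  have h1 := congrFun₂ h 1 j
  cases b <;> fin_cases i <;> simp_all

lemma natWordMatrix_injective : Function.Injective natWordMatrix := by
  intro w
  induction w with
  | nil =>
    rintro (_ | ⟨b, w'⟩) h
    · rfl
    · exact absurd h.symm (natWordMatrix_cons_ne_one b w')
  | cons b w ih =>
    rintro (_ | ⟨b', w'⟩) h
    · exact absurd h (natWordMatrix_cons_ne_one b w)
    · obtain rfl := head_eq_of_natWordMatrix_eq h
      rw [ih (natWordMatrix_eq_of_cons_eq h)]

lemma Nat.eq_of_mul_modEq_one_of_div_eq {n a d d' : ℕ} (hd : a * d ≡ 1 [MOD n])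
    (hd' : a * d' ≡ 1 [MOD n]) (hq : d / n = d' / n) : d = d' := by
  have hmod : d ≡ d' [MOD n] :=
    calc d = d * 1 := (mul_one d).symm
      _ ≡ d * (a * d') [MOD n] := hd'.symm.mul_left d
      _ = a * d * d' := by ring
      _ ≡ 1 * d' [MOD n] := hd.mul_right d'
      _ = d' := one_mul d'
  rw [← Nat.div_add_mod d n, ← Nat.div_add_mod d' n, hq, hmod]

lemma eq_of_mul_eq_mul_add_one {a b c c' d d' : ℕ} (h : a * d = b * c + 1)
    (h' : a * d' = b * c' + 1) (hb : 0 < b) (hq : d / b = d' / b) : c = c' ∧ d = d' := by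
  have hmod {c d : ℕ} (h : a * d = b * c + 1) : a * d ≡ 1 [MOD b] := by
    rw [h]; exact Nat.mul_add_mod_self_left b c 1
  obtain rfl : d = d' := Nat.eq_of_mul_modEq_one_of_div_eq (hmod h) (hmod h') hq
  exact ⟨Nat.eq_of_mul_eq_mul_left hb (by omega), rfl⟩

def hyperbolicNatSL2 (m : ℕ) : Set (Matrix (Fin 2) (Fin 2) ℕ) :=
  {M | M 0 0 * M 1 1 = M 0 1 * M 1 0 + 1 ∧ 3 ≤ M.trace ∧ M.trace ≤ m}

lemma off_diag_pos_of_mem_hyperbolicNatSL2 {m : ℕ} {M : Matrix (Fin 2) (Fin 2) ℕ}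
    (hM : M ∈ hyperbolicNatSL2 m) : 0 < M 0 1 ∧ 0 < M 1 0 := by
  obtain ⟨hdet, h3, -⟩ := hM
  rw [Matrix.trace_fin_two] at h3
  have hbc : M 0 1 * M 1 0 ≠ 0 := by
    intro h0
    rw [h0, zero_add, mul_eq_one] at hdet
    omega
  rw [mul_ne_zero_iff] at hbc
  omega

def sl2Code (M : Matrix (Fin 2) (Fin 2) ℕ) : ℕ × ℕ × Bool × ℕ :=
  (min (M 0 1) (M 1 0), M 0 0, decide (M 0 1 ≤ M 1 0), M 1 1 / min (M 0 1) (M 1 0))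

def sl2Codes (m : ℕ) : Finset (ℕ × ℕ × Bool × ℕ) :=
  (Icc 1 m).biUnion fun e => {e} ×ˢ range (m + 1) ×ˢ univ ×ˢ range (m / e + 1)

lemma sl2Code_mem_sl2Codes {m : ℕ} {M : Matrix (Fin 2) (Fin 2) ℕ}
    (hM : M ∈ hyperbolicNatSL2 m) : sl2Code M ∈ sl2Codes m := by
  obtain ⟨hb, hc⟩ := off_diag_pos_of_mem_hyperbolicNatSL2 hM
  obtain ⟨hdet, -, hm⟩ := hM
  rw [Matrix.trace_fin_two] at hm
  set e := min (M 0 1) (M 1 0)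
  have he : e * e < m * m :=
    calc e * e ≤ M 0 1 * M 1 0 := Nat.mul_le_mul (min_le_left _ _) (min_le_right _ _)
      _ < M 0 0 * M 1 1 := by omega
      _ ≤ m * m := Nat.mul_le_mul (by omega) (by omega)
  simp only [sl2Codes, sl2Code, mem_biUnion, mem_Icc, mem_product, mem_singleton, mem_range,
    mem_univ, true_and]
  refine ⟨e, ⟨by omega, (Nat.mul_self_lt_mul_self_iff.mp he).le⟩, rfl, by omega, ?_⟩
  exact Nat.lt_succ_of_le (Nat.div_le_div_right (by omega))

lemma sl2Code_injOn (m : ℕ) : Set.InjOn sl2Code (hyperbolicNatSL2 m) := by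
  intro M hM M' hM' h
  obtain ⟨hb, hc⟩ := off_diag_pos_of_mem_hyperbolicNatSL2 hM
  simp only [sl2Code, Prod.mk.injEq, decide_eq_decide] at h
  obtain ⟨he, ha, hflag, hq⟩ := h
  have hdet := hM.1
  have hdet' := hM'.1
  rw [← ha] at hdet'
  have hoff : M 0 1 = M' 0 1 ∧ M 1 0 = M' 1 0 ∧ M 1 1 = M' 1 1 := by
    by_cases hbc : M 0 1 ≤ M 1 0
    · rw [min_eq_left hbc, min_eq_left (hflag.mp hbc)] at he hq
      rw [← he] at hq
      obtain ⟨hc, hd⟩ := eq_of_mul_eq_mul_add_one hdet (by rw [he, hdet']) hb hq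
      exact ⟨he, hc, hd⟩
    · rw [min_eq_right (le_of_not_ge hbc), min_eq_right (le_of_not_ge (hflag.not.mp hbc))] at he hq
      rw [← he] at hq
      obtain ⟨hb, hd⟩ := eq_of_mul_eq_mul_add_one (by rw [hdet, mul_comm])
        (by rw [he, hdet', mul_comm]) hc hq
      exact ⟨hb, he, hd⟩
  ext i j
  fin_cases i <;> fin_cases j
  exacts [ha, hoff.1, hoff.2.1, hoff.2.2]

lemma card_sl2Codes_le (m : ℕ) : #(sl2Codes m) ≤ ∑ e ∈ Icc 1 m, 2 * (m + 1) * (m / e + 1) :=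
  card_biUnion_le.trans <| sum_le_sum fun _ _ => le_of_eq (by simp [card_product]; ring)

lemma hyperbolicNatSL2_finite (m : ℕ) : (hyperbolicNatSL2 m).Finite :=
  Set.Finite.of_injOn (fun _ hM => sl2Code_mem_sl2Codes hM) (sl2Code_injOn m)
    (sl2Codes m).finite_toSet

lemma ncard_hyperbolicNatSL2_le (m : ℕ) :
    (hyperbolicNatSL2 m).ncard ≤ ∑ e ∈ Icc 1 m, 2 * (m + 1) * (m / e + 1) := by
  calc (hyperbolicNatSL2 m).ncard ≤ (sl2Codes m : Set (ℕ × ℕ × Bool × ℕ)).ncard :=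
        Set.ncard_le_ncard_of_injOn sl2Code (fun _ hM => sl2Code_mem_sl2Codes hM)
          (sl2Code_injOn m) (sl2Codes m).finite_toSet
    _ ≤ _ := by rw [Set.ncard_coe_finset]; exact card_sl2Codes_le m

open Real in
lemma sum_div_le_mul_one_add_log (n : ℕ) :
    (∑ e ∈ Icc 1 n, (n / e : ℕ) : ℝ) ≤ n * (1 + log n) :=
  calc (∑ e ∈ Icc 1 n, (n / e : ℕ) : ℝ) ≤ ∑ e ∈ Icc 1 n, (n : ℝ) / e :=
        sum_le_sum fun _ _ => Nat.cast_div_le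
    _ = n * harmonic n := by
        simp only [harmonic_eq_sum_Icc, Rat.cast_sum, Rat.cast_inv, Rat.cast_natCast, mul_sum,
          div_eq_mul_inv]
    _ ≤ n * (1 + log n) := by gcongr; exact harmonic_le_one_add_log n

open Real in
lemma ncard_hyperbolicNatSL2_le_mul_log {m : ℕ} (hm : 3 ≤ m) :
    ((hyperbolicNatSL2 m).ncard : ℝ) ≤ 12 * m ^ 2 * log m := by
  have hm' : (3 : ℝ) ≤ m := by exact_mod_cast hm
  have hlog : 1 ≤ log m := by
    rw [le_log_iff_exp_le (by positivity)]
    linarith [exp_one_lt_d9]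
  calc ((hyperbolicNatSL2 m).ncard : ℝ)
      ≤ ∑ e ∈ Icc 1 m, 2 * ((m : ℝ) + 1) * ((m / e : ℕ) + 1) := by
        exact_mod_cast ncard_hyperbolicNatSL2_le m
    _ = 2 * ((m : ℝ) + 1) * ((∑ e ∈ Icc 1 m, (m / e : ℕ) : ℝ) + m) := by
        simp [← mul_sum, sum_add_distrib]
    _ ≤ 2 * ((m : ℝ) + 1) * (m * (1 + log m) + m) := by
        gcongr; exact sum_div_le_mul_one_add_log m
    _ = 2 * ((m : ℝ) + 1) * m * (2 + log m) := by ring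
    _ ≤ 2 * (2 * m) * m * (3 * log m) := by gcongr <;> linarith
    _ = 12 * m ^ 2 * log m := by ring

theorem count_words_of_bounded_trace :
    ∃ C : ℝ, 0 < C ∧ ∀ m : ℕ, 3 ≤ m →
      {w : List Bool | 3 ≤ (wordMatrix w).trace ∧ (wordMatrix w).trace ≤ (m : ℤ)}.Finite ∧
      ({w : List Bool | 3 ≤ (wordMatrix w).trace ∧ (wordMatrix w).trace ≤ (m : ℤ)}.ncard : ℝ)
        ≤ C * (m : ℝ) ^ 2 * Real.log m := by
  refine ⟨12, by norm_num, fun m hm => ?_⟩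
  have hwords : {w : List Bool | 3 ≤ (wordMatrix w).trace ∧ (wordMatrix w).trace ≤ (m : ℤ)} =
      natWordMatrix ⁻¹' hyperbolicNatSL2 m := by
    ext w
    simp [hyperbolicNatSL2, trace_wordMatrix, natWordMatrix_det]
  rw [hwords]
  refine ⟨(hyperbolicNatSL2_finite m).preimage natWordMatrix_injective.injOn, ?_⟩
  calc ((natWordMatrix ⁻¹' hyperbolicNatSL2 m).ncard : ℝ) ≤ (hyperbolicNatSL2 m).ncard := by
        exact_mod_cast Set.ncard_le_ncard_of_injOn natWordMatrix (fun _ hw => hw)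
          natWordMatrix_injective.injOn (hyperbolicNatSL2_finite m)
    _ ≤ 12 * m ^ 2 * Real.log m := ncard_hyperbolicNatSL2_le_mul_log hm
end

section
/- For any two words w₁ and w₂ in L and R, the trace of the concatenated word satisfies tr(w₁) ≤ tr(w₁w₂), where w₁w₂ denotes the word obtained by concatenating the lists of letters (so its matrix is the product of the matrices of w₁ and w₂). -/
def posMat (M : Matrix (Fin 2) (Fin 2) ℤ) : Prop :=
  1 ≤ M 0 0 ∧ 0 ≤ M 0 1 ∧ 0 ≤ M 1 0 ∧ 1 ≤ M 1 1

lemma posMat_word (w : List Bool) : posMat (wordMatrix w) := by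
  induction w with
  | nil => simp [wordMatrix, posMat, Matrix.one_apply]
  | cons b t ih =>
    have h : wordMatrix (b :: t) = (if b then Lmat else Rmat) * wordMatrix t := by
      simp [wordMatrix]
    obtain ⟨h1, h2, h3, h4⟩ := ih
    cases b <;>
      refine ⟨?_, ?_, ?_, ?_⟩ <;>
      simp [h, Lmat, Rmat, Matrix.mul_apply, Fin.sum_univ_two] <;>
      linarith

lemma wordMatrix_append (w₁ w₂ : List Bool) :
    wordMatrix (w₁ ++ w₂) = wordMatrix w₁ * wordMatrix w₂ := by
  simp [wordMatrix]

theorem trace_le_trace_append (w₁ w₂ : List Bool) :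
    (wordMatrix w₁).trace ≤ (wordMatrix (w₁ ++ w₂)).trace := by
  obtain ⟨a1, a2, a3, a4⟩ := posMat_word w₁
  obtain ⟨b1, b2, b3, b4⟩ := posMat_word w₂
  rw [wordMatrix_append]
  rw [Matrix.trace_fin_two, Matrix.trace_fin_two]
  simp only [Matrix.mul_apply, Fin.sum_univ_two]
  nlinarith [mul_nonneg a2 b3, mul_nonneg a3 b2]
end

section
/- If a word w in L and R contains at least one letter L and at least one letter R, then tr(w) ≥ 3. -/
lemma Lmat_mul (M : Matrix (Fin 2) (Fin 2) ℤ) :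
    (Lmat * M) 0 0 = M 0 0 + M 1 0 ∧ (Lmat * M) 0 1 = M 0 1 + M 1 1 ∧
    (Lmat * M) 1 0 = M 1 0 ∧ (Lmat * M) 1 1 = M 1 1 := by
  refine ⟨?_, ?_, ?_, ?_⟩ <;> simp [Lmat, Matrix.mul_apply, Fin.sum_univ_two]

lemma Rmat_mul (M : Matrix (Fin 2) (Fin 2) ℤ) :
    (Rmat * M) 0 0 = M 0 0 ∧ (Rmat * M) 0 1 = M 0 1 ∧
    (Rmat * M) 1 0 = M 0 0 + M 1 0 ∧ (Rmat * M) 1 1 = M 0 1 + M 1 1 := by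
  refine ⟨?_, ?_, ?_, ?_⟩ <;> simp [Rmat, Matrix.mul_apply, Fin.sum_univ_two]

lemma wordMatrix_key (w : List Bool) :
    0 ≤ wordMatrix w 0 1 ∧ 0 ≤ wordMatrix w 1 0 ∧ 1 ≤ wordMatrix w 0 0 ∧
    1 ≤ wordMatrix w 1 1 ∧
    wordMatrix w 0 0 * wordMatrix w 1 1 - wordMatrix w 0 1 * wordMatrix w 1 0 = 1 ∧
    (true ∈ w → 1 ≤ wordMatrix w 0 1) ∧ (false ∈ w → 1 ≤ wordMatrix w 1 0) := by
  induction w with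
  | nil => simp [wordMatrix, Matrix.one_apply]
  | cons b t ih =>
    obtain ⟨h1, h2, h3, h4, h5, h6, h7⟩ := ih
    cases b
    · have hw : wordMatrix (false :: t) = Rmat * wordMatrix t := by simp [wordMatrix]
      obtain ⟨e1, e2, e3, e4⟩ := Rmat_mul (wordMatrix t)
      rw [hw]
      refine ⟨by rw [e2]; linarith, by rw [e3]; linarith, by rw [e1]; linarith,
        by rw [e4]; linarith, by rw [e1, e2, e3, e4]; nlinarith, ?_, fun _ => by
          rw [e3]; linarith⟩
      intro h
      have ht : true ∈ t := by simpa using h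
      rw [e2]; linarith [h6 ht]
    · have hw : wordMatrix (true :: t) = Lmat * wordMatrix t := by simp [wordMatrix]
      obtain ⟨e1, e2, e3, e4⟩ := Lmat_mul (wordMatrix t)
      rw [hw]
      refine ⟨by rw [e2]; linarith, by rw [e3]; linarith, by rw [e1]; linarith,
        by rw [e4]; linarith, by rw [e1, e2, e3, e4]; nlinarith, fun _ => by
          rw [e2]; linarith, ?_⟩
      intro h
      have ht : false ∈ t := by simpa using h
      rw [e3]; linarith [h7 ht]

theorem trace_ge_three_of_mem_L_mem_R (w : List Bool)
    (hL : true ∈ w) (hR : false ∈ w) :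
    3 ≤ (wordMatrix w).trace := by
  obtain ⟨h1, h2, h3, h4, h5, h6, h7⟩ := wordMatrix_key w
  have hb := h6 hL
  have hc := h7 hR
  have htr : (wordMatrix w).trace = wordMatrix w 0 0 + wordMatrix w 1 1 := by
    simp [Matrix.trace, Matrix.diag, Fin.sum_univ_two]
  rw [htr]
  have had : 2 ≤ wordMatrix w 0 0 * wordMatrix w 1 1 := by nlinarith
  rcases (by omega : wordMatrix w 0 0 = 1 ∨ 2 ≤ wordMatrix w 0 0) with h | h
  · rw [h] at had; omega
  · omega
end

section
/- For every natural number n, the trace of the matrix (LR)^n, viewed as a real number, equals ((3+√5)/2)^n + ((3−√5)/2)^n. -/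
lemma LR_sq : (Lmat * Rmat) ^ 2 = 3 * (Lmat * Rmat) - 1 := by decide

lemma alpha_sq : ((3 + Real.sqrt 5) / 2) ^ 2 = 3 * ((3 + Real.sqrt 5) / 2) - 1 := by
  have h : Real.sqrt 5 ^ 2 = 5 := Real.sq_sqrt (by norm_num)
  ring_nf
  nlinarith [h]

lemma beta_sq : ((3 - Real.sqrt 5) / 2) ^ 2 = 3 * ((3 - Real.sqrt 5) / 2) - 1 := by
  have h : Real.sqrt 5 ^ 2 = 5 := Real.sq_sqrt (by norm_num)
  ring_nf
  nlinarith [h]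

theorem trace_LR_pow (n : ℕ) :
    ((((Lmat * Rmat) ^ n).trace : ℤ) : ℝ) =
      ((3 + Real.sqrt 5) / 2) ^ n + ((3 - Real.sqrt 5) / 2) ^ n := by
  set α := (3 + Real.sqrt 5) / 2
  set β := (3 - Real.sqrt 5) / 2
  have key : ∀ m : ℕ, ((((Lmat * Rmat) ^ m).trace : ℤ) : ℝ) = α ^ m + β ^ m ∧
      ((((Lmat * Rmat) ^ (m+1)).trace : ℤ) : ℝ) = α ^ (m+1) + β ^ (m+1) := by
    intro m
    induction m with
    | zero =>
      constructor
      · norm_num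
      · norm_num [Lmat, Rmat, Matrix.mul_fin_two, Matrix.trace_fin_two, α, β]
        ring
    | succ k ih =>
      obtain ⟨h0, h1⟩ := ih
      refine ⟨h1, ?_⟩
      have hM : (Lmat * Rmat) ^ (k + 2) = 3 * (Lmat * Rmat) ^ (k+1) - (Lmat * Rmat) ^ k := by
        have := LR_sq
        calc (Lmat * Rmat) ^ (k + 2) = (Lmat * Rmat) ^ k * (Lmat * Rmat) ^ 2 := by
              rw [← pow_add]
        _ = (Lmat * Rmat) ^ k * (3 * (Lmat * Rmat) - 1) := by rw [this]
        _ = 3 * (Lmat * Rmat) ^ (k+1) - (Lmat * Rmat) ^ k := by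
              rw [mul_sub, mul_one, pow_succ]
              noncomm_ring
      have ht : (((Lmat * Rmat) ^ (k+2)).trace : ℤ) =
          3 * (((Lmat * Rmat) ^ (k+1)).trace) - (((Lmat * Rmat) ^ k).trace) := by
        rw [hM, Matrix.trace_sub]
        rw [show (3 : Matrix (Fin 2) (Fin 2) ℤ) * (Lmat * Rmat) ^ (k+1) = (3:ℤ) • ((Lmat * Rmat) ^ (k+1)) by simp]
        rw [Matrix.trace_smul]
        simp
      push_cast [ht]
      rw [h0, h1]
      have ha : α ^ (k+2) = 3 * α ^ (k+1) - α ^ k := by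
        have := alpha_sq
        calc α ^ (k+2) = α ^ k * α ^ 2 := by ring
        _ = α ^ k * (3 * α - 1) := by rw [this]
        _ = 3 * α ^ (k+1) - α ^ k := by ring
      have hb : β ^ (k+2) = 3 * β ^ (k+1) - β ^ k := by
        have := beta_sq
        calc β ^ (k+2) = β ^ k * β ^ 2 := by ring
        _ = β ^ k * (3 * β - 1) := by rw [this]
        _ = 3 * β ^ (k+1) - β ^ k := by ring
      rw [ha, hb]; ring
  exact (key n).1
end

section
/- Let Γ be a discrete subgroup of SL(2,ℝ). Suppose A, B ∈ Γ with |tr(A)| > 2 (A is hyperbolic), tr(B) = 2 or tr(B) = −2, and B ≠ I, B ≠ −I (B is parabolic). Then A and B have no common eigenvector: there is no nonzero vector v ∈ ℝ² such that Av = a·v and Bv = b·v for some real numbers a, b. In other words, in a discrete subgroup of SL(2,ℝ), a hyperbolic element and a parabolic element cannot share a fixed point on the boundary of the hyperbolic plane. -/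
/-!
Let `v` be a common eigenvector, with `A v = a • v` and `B v = b • v`. The parabolic `B` is
`b • (1 + c • K)` with `b = ±1`, `c ≠ 0` and `K = shearGen v` nilpotent, so `B² = 1 + 2c • K`.
Since `A` is hyperbolic, `|a| ≠ 1`; replacing `A` by `A⁻¹` we may assume `|a| < 1`. Conjugation
by `A` scales `K` by `a²`, so `Aⁿ B² A⁻ⁿ = 1 + 2c a²ⁿ • K` is a sequence in `Γ` tending to `1`.
By discreteness it is eventually `1`, which forces `c = 0`.
-/

/-- `SL(2,ℝ)` with its natural topology, induced from the space of `2 × 2` real matrices. -/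
instance : TopologicalSpace (Matrix.SpecialLinearGroup (Fin 2) ℝ) :=
  TopologicalSpace.induced
    (fun g : Matrix.SpecialLinearGroup (Fin 2) ℝ => (g : Matrix (Fin 2) (Fin 2) ℝ))
    inferInstance

open Filter Topology Matrix
open scoped MatrixGroups

theorem eventually_eq_of_tendsto_of_discreteTopology {X ι : Type*} [TopologicalSpace X]
    {s : Set X} (hs : DiscreteTopology s) {x : X} (hx : x ∈ s) {l : Filter ι} {f : ι → X}
    (hf : ∀ i, f i ∈ s) (h : Tendsto f l (𝓝 x)) : ∀ᶠ i in l, f i = x := by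
  have h' : Tendsto (fun i => (⟨f i, hf i⟩ : s)) l (𝓝 ⟨x, hx⟩) := tendsto_subtype_rng.2 h
  rw [nhds_discrete, tendsto_pure] at h'
  exact h'.mono fun i hi => congrArg Subtype.val hi

namespace Matrix

theorem pow_mulVec_of_mulVec_eq_smul {n R : Type*} [Fintype n] [DecidableEq n] [CommRing R]
    {M : Matrix n n R} {v : n → R} {μ : R} (h : M *ᵥ v = μ • v) (k : ℕ) :
    (M ^ k) *ᵥ v = μ ^ k • v := by
  induction k with
  | zero => simp
  | succ k ih => rw [pow_succ, ← mulVec_mulVec, h, mulVec_smul, ih, smul_smul, pow_succ']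

theorem sq_sub_mul_trace_add_det_eq_zero {R : Type*} [CommRing R] [IsDomain R]
    {M : Matrix (Fin 2) (Fin 2) R} {v : Fin 2 → R} {μ : R} (hv : v ≠ 0)
    (h : M *ᵥ v = μ • v) : μ ^ 2 - μ * M.trace + M.det = 0 := by
  have hdet : (M - μ • 1).det = 0 :=
    exists_mulVec_eq_zero_iff.mp ⟨v, hv, by rw [sub_mulVec, h, smul_mulVec, one_mulVec, sub_self]⟩
  rw [det_fin_two] at hdet
  rw [det_fin_two, trace_fin_two]
  simp only [sub_apply, smul_apply, one_apply_eq, one_apply_ne, smul_eq_mul, mul_one, mul_zero,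
    sub_zero, ne_eq, zero_ne_one, one_ne_zero, not_false_eq_true, Fin.isValue] at hdet
  linear_combination hdet

section Shear

variable {R : Type*} [CommRing R]

def perp (v : Fin 2 → R) : Fin 2 → R := ![-v 1, v 0]

/-- The nilpotent matrix `w ↦ det (v, w) • v`; the shears fixing `v` are `1 + c • shearGen v`. -/
def shearGen (v : Fin 2 → R) : Matrix (Fin 2) (Fin 2) R := vecMulVec v (perp v)

theorem shearGen_mul_self (v : Fin 2 → R) : shearGen v * shearGen v = 0 := by
  have : perp v ⬝ᵥ v = 0 := by
    simp only [perp, dotProduct, Fin.sum_univ_two, cons_val_zero, cons_val_one, cons_val_fin_one]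
    ring
  simp [shearGen, vecMulVec_mul_vecMulVec, this]

theorem shearGen_ne_zero [IsDomain R] {v : Fin 2 → R} (hv : v ≠ 0) : shearGen v ≠ 0 := by
  intro h
  have h01 := congrFun (congrFun h 0) 1
  have h10 := congrFun (congrFun h 1) 0
  simp only [shearGen, perp, vecMulVec_apply, cons_val_zero, cons_val_one, cons_val_fin_one,
    zero_apply, mul_neg, neg_eq_zero, mul_self_eq_zero] at h01 h10
  exact hv (funext fun i => by fin_cases i <;> simp [h01, h10])

theorem perp_mulVec_vecMul (M : Matrix (Fin 2) (Fin 2) R) (v : Fin 2 → R) :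
    perp (M *ᵥ v) ᵥ* M = M.det • perp v := by
  ext j
  fin_cases j <;>
    simp only [perp, det_fin_two, vecMul, mulVec, dotProduct, Fin.sum_univ_two, Fin.zero_eta,
      Fin.mk_one, cons_val_zero, cons_val_one, cons_val_fin_one, Pi.smul_apply, smul_eq_mul] <;>
    ring

theorem mul_shearGen {M : Matrix (Fin 2) (Fin 2) R} {v : Fin 2 → R} {μ : R}
    (h : M *ᵥ v = μ • v) : M * shearGen v = μ • shearGen v := by
  rw [shearGen, mul_vecMulVec, h, smul_vecMulVec]

theorem smul_shearGen_mul {M : Matrix (Fin 2) (Fin 2) R} {v : Fin 2 → R} {μ : R}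
    (hdet : M.det = 1) (h : M *ᵥ v = μ • v) : μ • (shearGen v * M) = shearGen v := by
  have hp : perp (μ • v) = μ • perp v := by ext i; fin_cases i <;> simp [perp]
  rw [shearGen, vecMulVec_mul, ← vecMulVec_smul, ← smul_vecMul, ← hp, ← h,
    perp_mulVec_vecMul, hdet, one_smul]

theorem eq_smul_shearGen_of_trace_eq_zero {K : Type*} [Field K] {N : Matrix (Fin 2) (Fin 2) K}
    {v : Fin 2 → K} (hv : v ≠ 0) (hN : N *ᵥ v = 0) (htr : N.trace = 0) :
    ∃ c : K, N = c • shearGen v := by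
  have e0 : N 0 0 * v 0 + N 0 1 * v 1 = 0 := by
    simpa [mulVec, dotProduct, Fin.sum_univ_two] using congrFun hN 0
  have e1 : N 1 0 * v 0 + N 1 1 * v 1 = 0 := by
    simpa [mulVec, dotProduct, Fin.sum_univ_two] using congrFun hN 1
  rw [trace_fin_two] at htr
  rcases ne_or_eq (v 0) 0 with h0 | h0
  · refine ⟨N 0 1 / v 0 ^ 2, ?_⟩
    ext i j
    fin_cases i <;> fin_cases j <;>
      simp only [shearGen, perp, smul_apply, vecMulVec_apply, smul_eq_mul, Fin.zero_eta, Fin.mk_one,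
        cons_val_zero, cons_val_one, cons_val_fin_one] <;>
      field_simp
    · linear_combination e0
    · linear_combination v 0 * e1 - v 0 * v 1 * htr + v 1 * e0
    · linear_combination v 0 * htr - e0
  · have h1 : v 1 ≠ 0 := fun h1 => hv (funext fun i => by fin_cases i <;> simp [h0, h1])
    simp only [h0, mul_zero, zero_add, mul_eq_zero, h1, or_false] at e0 e1
    refine ⟨-N 1 0 / v 1 ^ 2, ?_⟩
    ext i j
    fin_cases i <;> fin_cases j <;>
      simp only [shearGen, perp, smul_apply, vecMulVec_apply, smul_eq_mul, Fin.zero_eta, Fin.mk_one,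
        cons_val_zero, cons_val_one, cons_val_fin_one, h0, e0, e1, mul_zero, zero_mul]
    · linear_combination htr - e1
    · field_simp

end Shear

end Matrix

namespace Matrix.SpecialLinearGroup

variable {R : Type*}

local notation:1024 "↑ₘ" A:1024 => ((A : SL(2, R)) : Matrix (Fin 2) (Fin 2) R)

theorem mul_shearGen_mul_inv [CommRing R] (M : SL(2, R)) {v : Fin 2 → R} {μ : R}
    (h : ↑ₘM *ᵥ v = μ • v) : ↑ₘM * shearGen v * ↑ₘM⁻¹ = μ ^ 2 • shearGen v := by
  have hMM : ↑ₘM * ↑ₘM⁻¹ = 1 := by rw [← coe_mul, mul_inv_cancel, coe_one]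
  calc ↑ₘM * shearGen v * ↑ₘM⁻¹
      = μ • (μ • (shearGen v * ↑ₘM)) * ↑ₘM⁻¹ := by
        rw [mul_shearGen h, smul_shearGen_mul M.det_coe h]
    _ = μ ^ 2 • (shearGen v * (↑ₘM * ↑ₘM⁻¹)) := by
        rw [smul_smul, smul_mul_assoc, mul_assoc, sq]
    _ = μ ^ 2 • shearGen v := by rw [hMM, mul_one]

section Field

variable [Field R] {M : SL(2, R)} {v : Fin 2 → R} {μ : R}

theorem sq_sub_mul_trace_add_one_eq_zero (hv : v ≠ 0) (h : ↑ₘM *ᵥ v = μ • v) :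
    μ ^ 2 - μ * trace ↑ₘM + 1 = 0 := by
  simpa [M.det_coe] using sq_sub_mul_trace_add_det_eq_zero hv h

theorem ne_zero_of_mulVec_eq_smul (hv : v ≠ 0) (h : ↑ₘM *ᵥ v = μ • v) : μ ≠ 0 := by
  rintro rfl
  simpa using sq_sub_mul_trace_add_one_eq_zero hv h

theorem inv_mulVec_eq_inv_smul (hv : v ≠ 0) (h : ↑ₘM *ᵥ v = μ • v) :
    ↑ₘM⁻¹ *ᵥ v = μ⁻¹ • v := by
  have hinv : μ • (↑ₘM⁻¹ *ᵥ v) = v := by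
    rw [← mulVec_smul, ← h, mulVec_mulVec, ← coe_mul, inv_mul_cancel, coe_one, one_mulVec]
  rw [← hinv, smul_smul, inv_mul_cancel₀ (ne_zero_of_mulVec_eq_smul hv h), one_smul, hinv]

theorem abs_ne_one_of_two_lt_abs_trace [LinearOrder R] [IsStrictOrderedRing R] (hv : v ≠ 0)
    (h : ↑ₘM *ᵥ v = μ • v) (htr : 2 < |trace ↑ₘM|) : |μ| ≠ 1 := by
  intro hμ
  have hchar := sq_sub_mul_trace_add_one_eq_zero hv h
  rcases (abs_eq zero_le_one).1 hμ with rfl | rfl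
  · rw [show trace ↑ₘM = 2 by linear_combination -hchar] at htr
    norm_num at htr
  · rw [show trace ↑ₘM = -2 by linear_combination hchar] at htr
    norm_num at htr

theorem exists_sq_eq_one_add_smul_shearGen [NeZero (2 : R)] (hv : v ≠ 0)
    (h : ↑ₘM *ᵥ v = μ • v) (htr : trace ↑ₘM = 2 ∨ trace ↑ₘM = -2)
    (h1 : ↑ₘM ≠ 1) (hm1 : ↑ₘM ≠ -1) :
    ∃ c : R, c ≠ 0 ∧ ↑ₘ(M ^ 2) = 1 + c • shearGen v := by
  have hchar := sq_sub_mul_trace_add_one_eq_zero hv h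
  have hμtr : μ * trace ↑ₘM = 2 := by
    rcases htr with ht | ht <;> rw [ht] at hchar ⊢
    · have hμ : (μ - 1) ^ 2 = 0 := by linear_combination hchar
      linear_combination 2 * (pow_eq_zero_iff two_ne_zero).1 hμ
    · have hμ : (μ + 1) ^ 2 = 0 := by linear_combination hchar
      linear_combination -2 * (pow_eq_zero_iff two_ne_zero).1 hμ
  have hμ2 : μ ^ 2 = 1 := by linear_combination hchar + hμtr
  obtain ⟨c, hc⟩ := eq_smul_shearGen_of_trace_eq_zero (N := μ • ↑ₘM - 1) hv
    (by rw [sub_mulVec, smul_mulVec, h, smul_smul, ← sq, hμ2, one_smul, one_mulVec, sub_self])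
    (by rw [trace_sub, trace_smul, trace_one, smul_eq_mul, hμtr]; norm_num)
  have hM : ↑ₘM = μ • (1 + c • shearGen v) := by
    rw [← hc, add_sub_cancel, smul_smul, ← sq, hμ2, one_smul]
  refine ⟨2 * c, mul_ne_zero two_ne_zero ?_, ?_⟩
  · rintro rfl
    rcases sq_eq_one_iff.1 hμ2 with rfl | rfl
    · exact h1 (by simpa using hM)
    · exact hm1 (by simpa using hM)
  · rw [coe_pow, hM, smul_pow, hμ2, one_smul, sq]
    simp only [add_mul, mul_add, one_mul, mul_one, smul_mul_assoc, mul_smul_comm,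
      shearGen_mul_self, smul_zero, add_zero]
    module

end Field

theorem eq_zero_of_one_add_smul_shearGen_mem
    {Γ : Subgroup SL(2, ℝ)} (hΓ : DiscreteTopology Γ) {A U : SL(2, ℝ)} (hA : A ∈ Γ)
    (hU : U ∈ Γ) {v : Fin 2 → ℝ} {a c : ℝ} (hv : v ≠ 0)
    (hAv : (A : Matrix (Fin 2) (Fin 2) ℝ) *ᵥ v = a • v) (ha : |a| < 1)
    (hUv : (U : Matrix (Fin 2) (Fin 2) ℝ) = 1 + c • shearGen v) : c = 0 := by
  have hconj (n : ℕ) : ((A ^ n * U * (A ^ n)⁻¹ : SL(2, ℝ)) : Matrix (Fin 2) (Fin 2) ℝ) =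
      1 + (c * (a ^ 2) ^ n) • shearGen v := by
    have hAn : ((A ^ n : SL(2, ℝ)) : Matrix (Fin 2) (Fin 2) ℝ) *ᵥ v = a ^ n • v := by
      rw [coe_pow]; exact pow_mulVec_of_mulVec_eq_smul hAv n
    rw [coe_mul, coe_mul, hUv, mul_add, add_mul, mul_one, ← coe_mul, mul_inv_cancel, coe_one,
      mul_smul_comm, smul_mul_assoc, mul_shearGen_mul_inv _ hAn, smul_smul, ← pow_mul,
      ← pow_mul, mul_comm n 2]
  have hlim : Tendsto (fun n : ℕ => A ^ n * U * (A ^ n)⁻¹) atTop (𝓝 1) := by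
    have hcoeff : Tendsto (fun n : ℕ => c * (a ^ 2) ^ n) atTop (𝓝 0) := by
      simpa using (tendsto_pow_atTop_nhds_zero_of_abs_lt_one
        (by rw [abs_pow]; exact pow_lt_one₀ (abs_nonneg a) ha two_ne_zero)).const_mul c
    have hind : Topology.IsInducing (fun g : SL(2, ℝ) => (g : Matrix (Fin 2) (Fin 2) ℝ)) :=
      ⟨rfl⟩
    rw [hind.tendsto_nhds_iff]
    simpa [Function.comp_def, hconj] using
      (tendsto_const_nhds.add (hcoeff.smul_const (shearGen v)) :
        Tendsto (fun n : ℕ => 1 + (c * (a ^ 2) ^ n) • shearGen v) atTop _)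
  obtain ⟨n, hn⟩ := (eventually_eq_of_tendsto_of_discreteTopology hΓ (one_mem Γ)
    (fun n => mul_mem (mul_mem (pow_mem hA n) hU) (inv_mem (pow_mem hA n))) hlim).exists
  have hK := hconj n
  rw [hn, coe_one, left_eq_add, smul_eq_zero] at hK
  simpa [ne_zero_of_mulVec_eq_smul hv hAv, shearGen_ne_zero hv] using hK

end Matrix.SpecialLinearGroup

open Matrix.SpecialLinearGroup

/-- In a discrete subgroup of `SL(2,ℝ)`, a hyperbolic element `A` (i.e. `|tr A| > 2`) and a
parabolic element `B` (i.e. `tr B = ±2`, `B ≠ ±I`) cannot have a common eigenvector, that is,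
they cannot share a fixed point on the boundary of the hyperbolic plane. -/
theorem no_common_eigenvector_of_hyperbolic_parabolic
    (Γ : Subgroup (Matrix.SpecialLinearGroup (Fin 2) ℝ)) (hdisc : DiscreteTopology Γ)
    (A B : Matrix.SpecialLinearGroup (Fin 2) ℝ) (hA : A ∈ Γ) (hB : B ∈ Γ)
    (hAhyp : 2 < |Matrix.trace (A : Matrix (Fin 2) (Fin 2) ℝ)|)
    (hBtr : Matrix.trace (B : Matrix (Fin 2) (Fin 2) ℝ) = 2 ∨
      Matrix.trace (B : Matrix (Fin 2) (Fin 2) ℝ) = -2)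
    (hB1 : (B : Matrix (Fin 2) (Fin 2) ℝ) ≠ 1)
    (hBneg1 : (B : Matrix (Fin 2) (Fin 2) ℝ) ≠ -1) :
    ¬ ∃ v : Fin 2 → ℝ, v ≠ 0 ∧ ∃ a b : ℝ,
      (A : Matrix (Fin 2) (Fin 2) ℝ).mulVec v = a • v ∧
      (B : Matrix (Fin 2) (Fin 2) ℝ).mulVec v = b • v := by
  rintro ⟨v, hv, a, b, hAv, hBv⟩
  obtain ⟨c, hc, hB2⟩ := exists_sq_eq_one_add_smul_shearGen hv hBv hBtr hB1 hBneg1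
  refine hc ?_
  rcases (abs_ne_one_of_two_lt_abs_trace hv hAv hAhyp).lt_or_gt with ha | ha
  · exact eq_zero_of_one_add_smul_shearGen_mem hdisc hA (pow_mem hB 2) hv hAv ha hB2
  · have hA'v := inv_mulVec_eq_inv_smul hv hAv
    have ha' : |a⁻¹| < 1 := by rw [abs_inv]; exact inv_lt_one_of_one_lt₀ ha
    exact eq_zero_of_one_add_smul_shearGen_mem hdisc (inv_mem hA) (pow_mem hB 2) hv hA'v ha' hB2
end
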